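/- arXiv:2411.01256 — 2 statements merged into one kernel-verified Lean document; each statement's English description precedes it below -/
import Mathlib

section
/- Let $\alpha>-2$ and $\epsilon>0$, and let $U_{\epsilon,\alpha}(x)=\frac{(3+\alpha)^{1/(4+2\alpha)}\,\epsilon^{1/2}}{(\epsilon^{2+\alpha}+|x|^{2+\alpha})^{1/(2+\alpha)}}$ for $x\in\mathbb{R}^3$. Then equality holds in the weighted Sobolev inequality: $\int_{\mathbb{R}^3}|\nabla U_{\epsilon,\alpha}|^2\,dx \;=\; S_\alpha\left(\int_{\mathbb{R}^3}|x|^{\alpha}\,U_{\epsilon,\alpha}^{\,6+2\alpha}\,dx\right)^{\frac{2}{6+2\alpha}}.$ -/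
/-! With `p = 2 + α`, `U = C (ε^p + |x|^p)^(-1/p)` is radial, so polar coordinates and the
substitution `r = ε u^(1/p)` reduce both integrals to Beta integrals
`∫₀^∞ u^(s-1) (1 + u)^(-(s+t)) du = Γ(s) Γ(t) / Γ(s+t)`. The Dirichlet energy comes out as
`(p+1) K_p C²/ε` and the weighted integral as `K_p (C²/ε)^(p+1)` for one constant `K_p`, and
`S_α = (p+1) K_p^(p/(p+1))`. Both sides being 2-homogeneous in `U`, any amplitude `C > 0` works. -/

open MeasureTheory Real

/-- `ℝ³` as a Euclidean space. -/
abbrev E3 := EuclideanSpace ℝ (Fin 3)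

/-- The best constant `S_α` in the weighted (Hardy/Hénon–)Sobolev inequality on `ℝ³`. -/
noncomputable def Sconst (a : ℝ) : ℝ :=
  (3 + a) * ((4 * Real.pi / (2 + a)) *
    (Real.Gamma ((3 + a) / (2 + a))) ^ 2 / Real.Gamma (2 * (3 + a) / (2 + a))) ^ ((2 + a) / (3 + a))

open Set

theorem intervalIntegral_rpow_mul_one_sub_rpow {s t : ℝ} (hs : 0 < s) (ht : 0 < t) :
    ∫ x in (0 : ℝ)..1, x ^ (s - 1) * (1 - x) ^ (t - 1) = Gamma s * Gamma t / Gamma (s + t) := by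
  have hreal :
      Complex.betaIntegral s t = ↑(∫ x in (0 : ℝ)..1, x ^ (s - 1) * (1 - x) ^ (t - 1)) := by
    rw [Complex.betaIntegral, ← intervalIntegral.integral_ofReal]
    refine intervalIntegral.integral_congr fun x hx => ?_
    rw [uIcc_of_le zero_le_one] at hx
    push_cast
    rw [Complex.ofReal_cpow hx.1, Complex.ofReal_cpow (sub_nonneg.2 hx.2)]
    push_cast
    rfl
  have h := Complex.betaIntegral_eq_Gamma_mul_div s t (by simpa) (by simpa)
  rw [hreal, ← Complex.ofReal_add] at h
  simp only [Complex.Gamma_ofReal] at h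
  exact_mod_cast h

theorem image_div_one_sub_Ioo : (fun y : ℝ => y / (1 - y)) '' Ioo 0 1 = Ioi 0 := by
  ext x
  refine ⟨?_, fun (hx : 0 < x) => ⟨x / (1 + x), ?_, ?_⟩⟩
  · rintro ⟨y, ⟨hy0, hy1⟩, rfl⟩
    exact div_pos hy0 (sub_pos.2 hy1)
  · have : (0 : ℝ) < 1 + x := by linarith
    exact ⟨div_pos hx this, (div_lt_one this).2 (by linarith)⟩
  · have : (1 : ℝ) + x ≠ 0 := by linarith
    field_simp
    ring

theorem injOn_div_one_sub_Ioo : InjOn (fun y : ℝ => y / (1 - y)) (Ioo 0 1) := by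
  intro u ⟨_, hu⟩ v ⟨_, hv⟩ h
  have : (1 : ℝ) - u ≠ 0 := (sub_pos.2 hu).ne'
  have : (1 : ℝ) - v ≠ 0 := (sub_pos.2 hv).ne'
  field_simp at h
  linarith

theorem integral_Ioi_rpow_mul_one_add_rpow_neg {s t : ℝ} (hs : 0 < s) (ht : 0 < t) :
    ∫ x in Ioi (0 : ℝ), x ^ (s - 1) * (1 + x) ^ (-(s + t))
      = Gamma s * Gamma t / Gamma (s + t) := by
  set f : ℝ → ℝ := fun y => y / (1 - y)
  have hderiv : ∀ y ∈ Ioo (0 : ℝ) 1, HasDerivWithinAt f ((1 - y)⁻¹ ^ 2) (Ioo 0 1) y := by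
    intro y ⟨_, hy1⟩
    have h1 : (1 : ℝ) - y ≠ 0 := (sub_pos.2 hy1).ne'
    have h : HasDerivAt f ((1 * (1 - y) - y * -1) / (1 - y) ^ 2) y :=
      (hasDerivAt_id' y).div ((hasDerivAt_id' y).const_sub 1) h1
    rw [show (1 * (1 - y) - y * -1) / (1 - y) ^ 2 = (1 - y)⁻¹ ^ 2 by field_simp; ring] at h
    exact h.hasDerivWithinAt
  -- with `z = 1 - y`: Jacobian `z⁻²`, `f y = y z⁻¹` and `1 + f y = z⁻¹`
  have hintegrand : ∀ y ∈ Ioo (0 : ℝ) 1,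
      |(1 - y)⁻¹ ^ 2| • (f y ^ (s - 1) * (1 + f y) ^ (-(s + t)))
        = y ^ (s - 1) * (1 - y) ^ (t - 1) := by
    intro y ⟨hy0, hy1⟩
    have hz : 0 < 1 - y := sub_pos.2 hy1
    have h1 : 1 + f y = (1 - y)⁻¹ := by simp only [f]; field_simp; ring
    have hexp : (1 - y) ^ (t - 1)
        = (1 - y) ^ ((-1 : ℝ) * (2 : ℕ)) * (1 - y) ^ (-(s - 1)) * (1 - y) ^ (- -(s + t)) := by
      rw [← rpow_add hz, ← rpow_add hz]
      congr 1
      push_cast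
      ring
    rw [h1, smul_eq_mul, abs_of_nonneg (by positivity), div_rpow hy0.le hz.le, inv_rpow hz.le,
      ← rpow_neg hz.le, ← rpow_natCast, ← rpow_neg_one, ← rpow_mul hz.le, div_eq_mul_inv,
      ← rpow_neg hz.le, hexp]
    ring
  rw [← image_div_one_sub_Ioo,
    integral_image_eq_integral_abs_deriv_smul measurableSet_Ioo hderiv injOn_div_one_sub_Ioo,
    setIntegral_congr_fun measurableSet_Ioo hintegrand, ← integral_Ioc_eq_integral_Ioo,
    ← intervalIntegral.integral_of_le zero_le_one]
  exact intervalIntegral_rpow_mul_one_sub_rpow hs ht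

theorem integral_Ioi_rpow_mul_add_rpow_rpow_neg_eq_mul {p ε : ℝ} (hε : 0 < ε) (c d : ℝ) :
    ∫ r in Ioi (0 : ℝ), r ^ c * (ε ^ p + r ^ p) ^ (-d)
      = ε ^ (c + 1 - d * p) * ∫ x in Ioi (0 : ℝ), x ^ c * (1 + x ^ p) ^ (-d) := by
  have h := integral_comp_mul_left_Ioi (fun r => r ^ c * (ε ^ p + r ^ p) ^ (-d)) 0 hε
  have hscale : ∀ x ∈ Ioi (0 : ℝ), (ε * x) ^ c * (ε ^ p + (ε * x) ^ p) ^ (-d)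
      = ε ^ (c - d * p) * (x ^ c * (1 + x ^ p) ^ (-d)) := by
    intro x (hx : 0 < x)
    rw [mul_rpow hε.le hx.le, mul_rpow hε.le hx.le,
      show ε ^ p + ε ^ p * x ^ p = ε ^ p * (1 + x ^ p) by ring,
      mul_rpow (by positivity) (by positivity), ← rpow_mul hε.le, sub_eq_add_neg, rpow_add hε]
    ring_nf
  rw [mul_zero, setIntegral_congr_fun measurableSet_Ioi hscale, integral_const_mul, smul_eq_mul,
    eq_inv_mul_iff_mul_eq₀ hε.ne'] at h
  rw [← h, ← mul_assoc, show c + 1 - d * p = 1 + (c - d * p) by ring, rpow_add hε, rpow_one]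

theorem integral_Ioi_rpow_mul_one_add_rpow_rpow_neg {p : ℝ} (hp : 0 < p) (c d : ℝ) :
    ∫ x in Ioi (0 : ℝ), x ^ c * (1 + x ^ p) ^ (-d)
      = p⁻¹ * ∫ u in Ioi (0 : ℝ), u ^ ((c + 1) / p - 1) * (1 + u) ^ (-d) := by
  rw [← integral_comp_rpow_Ioi (fun u => u ^ ((c + 1) / p - 1) * (1 + u) ^ (-d)) hp.ne',
    ← integral_const_mul]
  refine setIntegral_congr_fun measurableSet_Ioi fun x (hx : 0 < x) => ?_
  have hexp : x ^ c = x ^ (p - 1) * (x ^ p) ^ ((c + 1) / p - 1) := by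
    rw [← rpow_mul hx.le, ← rpow_add hx]
    congr 1
    field_simp
    ring
  rw [smul_eq_mul, abs_of_pos hp, hexp]
  field_simp

theorem integral_Ioi_rpow_mul_add_rpow_rpow_neg {p ε c d : ℝ} (hp : 0 < p) (hε : 0 < ε)
    (hc : 0 < (c + 1) / p) (hd : (c + 1) / p < d) :
    ∫ r in Ioi (0 : ℝ), r ^ c * (ε ^ p + r ^ p) ^ (-d)
      = ε ^ (c + 1 - d * p) / p * (Gamma ((c + 1) / p) * Gamma (d - (c + 1) / p) / Gamma d) := by
  have hbeta := integral_Ioi_rpow_mul_one_add_rpow_neg hc (sub_pos.2 hd)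
  rw [add_sub_cancel] at hbeta
  rw [integral_Ioi_rpow_mul_add_rpow_rpow_neg_eq_mul hε,
    integral_Ioi_rpow_mul_one_add_rpow_rpow_neg hp, hbeta]
  ring

theorem integral_fun_norm_euclideanSpace_fin_three (f : ℝ → ℝ) :
    ∫ x : E3, f ‖x‖ = 4 * π * ∫ r in Ioi (0 : ℝ), r ^ 2 * f r := by
  rw [integral_fun_norm_addHaar volume f, measureReal_def, EuclideanSpace.volume_ball_fin_three]
  simp only [finrank_euclideanSpace_fin, ENNReal.ofReal_one, one_pow, one_mul,
    ENNReal.toReal_ofReal (by positivity : 0 ≤ π * 4 / 3)]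
  norm_num
  ring

theorem hasFDerivAt_norm {E : Type*} [NormedAddCommGroup E] [InnerProductSpace ℝ E] {x : E}
    (hx : x ≠ 0) : HasFDerivAt (fun y : E => ‖y‖) (‖x‖⁻¹ • innerSL ℝ x) x := by
  have hx2 : ‖x‖ ^ 2 ≠ 0 := by positivity
  have h :=
    (Real.hasDerivAt_sqrt hx2).comp_hasFDerivAt x (hasStrictFDerivAt_norm_sq x).hasFDerivAt
  simp only [Function.comp_def, sqrt_sq (norm_nonneg _)] at h
  refine h.congr_fderiv ?_
  ext v
  simp only [smul_apply, coe_innerSL_apply, nsmul_eq_mul, Nat.cast_ofNat,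
    smul_eq_mul]
  field_simp

theorem norm_fderiv_comp_norm {E : Type*} [NormedAddCommGroup E] [InnerProductSpace ℝ E]
    {φ : ℝ → ℝ} {φ' : ℝ} {x : E} (hx : x ≠ 0) (hφ : HasDerivAt φ φ' ‖x‖) :
    ‖fderiv ℝ (fun y : E => φ ‖y‖) x‖ = |φ'| := by
  have h : HasFDerivAt (fun y : E => φ ‖y‖) (φ' • ‖x‖⁻¹ • innerSL ℝ x) x :=
    hφ.comp_hasFDerivAt x (hasFDerivAt_norm hx)
  rw [h.fderiv, norm_smul, norm_smul, innerSL_apply_norm,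
    Real.norm_eq_abs, norm_inv, norm_norm]
  field_simp [norm_ne_zero_iff.2 hx]

theorem hasDerivAt_div_add_rpow_rpow_inv {p ε r : ℝ} (hp : 0 < p) (hε : 0 < ε) (hr : 0 < r)
    (C : ℝ) :
    HasDerivAt (fun r => C / (ε ^ p + r ^ p) ^ (1 / p))
      (-(C * r ^ (p - 1) * (ε ^ p + r ^ p) ^ (-((p + 1) / p)))) r := by
  have hw : 0 < ε ^ p + r ^ p := by positivity
  have hg := (((hasDerivAt_rpow_const (p := p) (Or.inl hr.ne')).const_add (ε ^ p)).rpow_const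
    (p := 1 / p) (Or.inl hw.ne'))
  refine ((hasDerivAt_const r C).div hg (by positivity)).congr_deriv ?_
  have hexp : (ε ^ p + r ^ p) ^ (-((p + 1) / p)) * ((ε ^ p + r ^ p) ^ (1 / p)) ^ 2
      = (ε ^ p + r ^ p) ^ (1 / p - 1) := by
    rw [← rpow_natCast, ← rpow_mul hw.le, ← rpow_add hw]
    congr 1
    field_simp
    ring
  rw [div_eq_iff (by positivity), ← hexp]
  field_simp
  ring

/-- `K_p = ∫_{ℝ³} |x|^(p-2) (1 + |x|^p)^(-2(p+1)/p) dx`. -/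
noncomputable def bubbleConst (p : ℝ) : ℝ :=
  4 * π / p * Gamma ((p + 1) / p) ^ 2 / Gamma (2 * (p + 1) / p)

theorem Gamma_add_two_mul_Gamma {q : ℝ} (hq : 0 < q) :
    Gamma (q + 2) * Gamma q = (q + 1) / q * Gamma (q + 1) ^ 2 := by
  rw [show q + 2 = (q + 1) + 1 by ring, Gamma_add_one (by positivity), Gamma_add_one hq.ne']
  field_simp

theorem integral_norm_fderiv_bubble_sq {p ε : ℝ} (hp : 0 < p) (hε : 0 < ε) (C : ℝ) :
    ∫ x : E3, ‖fderiv ℝ (fun y => C / (ε ^ p + ‖y‖ ^ p) ^ (1 / p)) x‖ ^ 2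
      = (p + 1) * bubbleConst p * (C ^ 2 / ε) := by
  have hradial : ∀ᵐ x : E3,
      ‖fderiv ℝ (fun y => C / (ε ^ p + ‖y‖ ^ p) ^ (1 / p)) x‖ ^ 2
        = (C * ‖x‖ ^ (p - 1) * (ε ^ p + ‖x‖ ^ p) ^ (-((p + 1) / p))) ^ 2 := by
    filter_upwards [Measure.ae_ne volume 0] with x hx
    rw [norm_fderiv_comp_norm hx (hasDerivAt_div_add_rpow_rpow_inv hp hε (norm_pos_iff.2 hx) C),
      sq_abs, neg_sq]
  have hintegrand : ∀ r ∈ Ioi (0 : ℝ),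
      r ^ 2 * (C * r ^ (p - 1) * (ε ^ p + r ^ p) ^ (-((p + 1) / p))) ^ 2
        = C ^ 2 * (r ^ (2 * p) * (ε ^ p + r ^ p) ^ (-(2 * (p + 1) / p))) := by
    intro r (hr : 0 < r)
    have hw : 0 < ε ^ p + r ^ p := by positivity
    have hr2 : r ^ 2 * (r ^ (p - 1)) ^ 2 = r ^ (2 * p) := by
      rw [← rpow_natCast, ← rpow_natCast, ← rpow_mul hr.le, ← rpow_add hr]
      push_cast
      ring_nf
    have hw2 :
        ((ε ^ p + r ^ p) ^ (-((p + 1) / p))) ^ 2 = (ε ^ p + r ^ p) ^ (-(2 * (p + 1) / p)) := by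
      rw [← rpow_natCast, ← rpow_mul hw.le]
      push_cast
      ring_nf
    rw [mul_pow, mul_pow, hw2, ← hr2]
    ring
  have hc : 0 < (2 * p + 1) / p := by positivity
  have hd : (2 * p + 1) / p < 2 * (p + 1) / p := by gcongr; linarith
  rw [integral_congr_ae hradial, integral_fun_norm_euclideanSpace_fin_three
    (fun r => (C * r ^ (p - 1) * (ε ^ p + r ^ p) ^ (-((p + 1) / p))) ^ 2),
    setIntegral_congr_fun measurableSet_Ioi hintegrand, integral_const_mul,
    integral_Ioi_rpow_mul_add_rpow_rpow_neg hp hε hc hd]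
  have hεexp : ε ^ (2 * p + 1 - 2 * (p + 1) / p * p) = ε⁻¹ := by
    rw [show 2 * p + 1 - 2 * (p + 1) / p * p = -1 by field_simp; ring, rpow_neg_one]
  have hGamma : Gamma ((2 * p + 1) / p) * Gamma (2 * (p + 1) / p - (2 * p + 1) / p)
      = (p + 1) * Gamma ((p + 1) / p) ^ 2 := by
    rw [show (2 * p + 1) / p = 1 / p + 2 by field_simp; ring,
      show 2 * (p + 1) / p - (1 / p + 2) = 1 / p by field_simp; ring,
      Gamma_add_two_mul_Gamma (by positivity), show (p + 1) / p = 1 / p + 1 by field_simp; ring]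
    field_simp
    ring
  rw [hεexp, mul_div_assoc _ (Gamma _), ← mul_div_assoc, hGamma, bubbleConst]
  ring

theorem integral_rpow_norm_mul_bubble_rpow {p ε C : ℝ} (hp : 0 < p) (hε : 0 < ε)
    (hC : 0 ≤ C) :
    ∫ x : E3, ‖x‖ ^ (p - 2) * (C / (ε ^ p + ‖x‖ ^ p) ^ (1 / p)) ^ (2 * p + 2)
      = bubbleConst p * (C ^ 2 / ε) ^ (p + 1) := by
  have hintegrand : ∀ r ∈ Ioi (0 : ℝ),
      r ^ 2 * (r ^ (p - 2) * (C / (ε ^ p + r ^ p) ^ (1 / p)) ^ (2 * p + 2))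
        = C ^ (2 * p + 2) * (r ^ p * (ε ^ p + r ^ p) ^ (-(2 * (p + 1) / p))) := by
    intro r (hr : 0 < r)
    have hw : 0 < ε ^ p + r ^ p := by positivity
    have hr2 : r ^ 2 * r ^ (p - 2) = r ^ p := by
      rw [← rpow_natCast, ← rpow_add hr]
      norm_num
    have hw2 :
        ((ε ^ p + r ^ p) ^ (1 / p)) ^ (2 * p + 2) = (ε ^ p + r ^ p) ^ (2 * (p + 1) / p) := by
      rw [← rpow_mul hw.le]
      congr 1
      field_simp
    rw [div_rpow hC (by positivity), hw2, rpow_neg hw.le, ← hr2]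
    field_simp
  have hc : 0 < (p + 1) / p := by positivity
  have hd : (p + 1) / p < 2 * (p + 1) / p := by gcongr; linarith
  rw [integral_fun_norm_euclideanSpace_fin_three
    (fun r => r ^ (p - 2) * (C / (ε ^ p + r ^ p) ^ (1 / p)) ^ (2 * p + 2)),
    setIntegral_congr_fun measurableSet_Ioi hintegrand, integral_const_mul,
    integral_Ioi_rpow_mul_add_rpow_rpow_neg hp hε hc hd]
  have hεexp : ε ^ (p + 1 - 2 * (p + 1) / p * p) = ε ^ (-(p + 1)) := by
    congr 1
    field_simp
    ring
  have hpow : (C ^ 2 / ε) ^ (p + 1) = C ^ (2 * p + 2) * ε ^ (-(p + 1)) := by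
    rw [div_rpow (by positivity) hε.le, ← rpow_natCast, ← rpow_mul hC, rpow_neg hε.le]
    push_cast
    ring_nf
  rw [hεexp, show 2 * (p + 1) / p - (p + 1) / p = (p + 1) / p by ring, hpow, bubbleConst]
  ring

/-- The function `U_{ε,α}` achieves equality in the weighted Sobolev inequality, i.e. it
achieves the best constant `S_α`. -/
theorem stmt2 (a ε : ℝ) (ha : -2 < a) (hε : 0 < ε) (U : E3 → ℝ)
    (hU : ∀ x : E3, U x = (3 + a) ^ (1 / (4 + 2 * a)) * ε ^ ((1 : ℝ) / 2) /
      (ε ^ (2 + a) + ‖x‖ ^ (2 + a)) ^ (1 / (2 + a))) :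
    (∫ x : E3, ‖fderiv ℝ U x‖ ^ 2)
      = Sconst a * (∫ x : E3, ‖x‖ ^ a * U x ^ (6 + 2 * a)) ^ (2 / (6 + 2 * a)) := by
  obtain ⟨p, hp, rfl⟩ : ∃ p, 0 < p ∧ a = p - 2 := ⟨a + 2, by linarith, by ring⟩
  set C := (3 + (p - 2)) ^ (1 / (4 + 2 * (p - 2))) * ε ^ ((1 : ℝ) / 2)
  have hC : 0 < C := mul_pos (rpow_pos_of_pos (by linarith) _) (rpow_pos_of_pos hε _)
  have hUC : U = fun x => C / (ε ^ p + ‖x‖ ^ p) ^ (1 / p) := by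
    funext x
    rw [hU x, show 2 + (p - 2) = p by ring]
  have hK : 0 < bubbleConst p := by unfold bubbleConst; positivity
  have hB : 0 < C ^ 2 / ε := by positivity
  rw [hUC, integral_norm_fderiv_bubble_sq hp hε, show 6 + 2 * (p - 2) = 2 * p + 2 by ring,
    integral_rpow_norm_mul_bubble_rpow hp hε hC.le, Sconst, show 2 + (p - 2) = p by ring,
    show 3 + (p - 2) = p + 1 by ring, ← bubbleConst,
    show 2 / (2 * p + 2) = (p + 1)⁻¹ by field_simp, mul_rpow hK.le (by positivity),
    rpow_rpow_inv hB.le (by positivity)]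
  have hKsplit : bubbleConst p ^ (p / (p + 1)) * bubbleConst p ^ (p + 1)⁻¹ = bubbleConst p := by
    rw [← rpow_add hK, show p / (p + 1) + (p + 1)⁻¹ = 1 by field_simp, rpow_one]
  linear_combination -((p + 1) * (C ^ 2 / ε)) * hKsplit
end

section
/- Let $\alpha_1>\alpha_2>-2$ with $\alpha_1>-1$, and let $\varphi\in C_c^\infty(B,[0,1])$ be radial with $\varphi\equiv1$ on $\{|x|\le1/3\}$ and $\varphi\equiv0$ on $\{|x|\ge2/3\}$. Set $u_{\epsilon,\alpha_1}=\varphi\,U_{\epsilon,\alpha_1}$ and $\tilde K:=\int_{\mathbb{R}^3}|x|^{\alpha_2}\,U_{1,\alpha_1}^{\,6+2\alpha_2}\,dx$. Then $\tilde K$ is finite and, as $\epsilon\to0^+$, $\int_B|x|^{\alpha_2}\,|u_{\epsilon,\alpha_1}|^{6+2\alpha_2}\,dx \;=\; \tilde K+O\left(\epsilon^{3+\alpha_2}\right).$ -/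
/-!
After the substitution `x = ε • y` the weight `‖x‖ ^ α₂` and the exponent `6 + 2 α₂` are
exactly scale invariant in dimension 3, so the integral becomes `∫ φ (ε • y) ^ (6 + 2 α₂) g y`
with `g y = ‖y‖ ^ α₂ U_{1,α₁} y ^ (6 + 2 α₂)`. As `U_{1,α₁} y ≤ C min (1, ‖y‖⁻¹)`, `g` is
integrable near `0` and decays like `‖y‖ ^ (-6 - α₂)`; the cut-off only acts on
`‖y‖ ≥ 1 / (3 ε)`, and there the tail integral of `‖y‖ ^ (-6 - α₂)` scales like `ε ^ (3 + α₂)`.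
-/

open MeasureTheory Real Asymptotics

open Set Metric Filter Topology
open scoped Pointwise

namespace MeasureTheory

variable {E : Type*} [NormedAddCommGroup E] [NormedSpace ℝ E] [FiniteDimensional ℝ E]
  [MeasurableSpace E] [BorelSpace E] (μ : Measure E) [μ.IsAddHaarMeasure]

theorem integrableOn_compl_ball_norm_rpow [Nontrivial E] {t R : ℝ}
    (ht : t < -Module.finrank ℝ E) (hR : 0 < R) :
    IntegrableOn (fun x : E => ‖x‖ ^ t) (ball 0 R)ᶜ μ := by
  have hradial : (ball (0 : E) R)ᶜ.indicator (fun x => ‖x‖ ^ t) =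
      fun x => (Ici R).indicator (fun r : ℝ => r ^ t) ‖x‖ := by
    ext x
    by_cases hx : R ≤ ‖x‖ <;> simp [hx]
  rw [← integrable_indicator_iff measurableSet_ball.compl, hradial,
    integrable_fun_norm_addHaar μ]
  have hpow : IntegrableOn (fun r : ℝ => r ^ (t + Module.finrank ℝ E - 1)) (Ici R) := by
    rw [integrableOn_Ici_iff_integrableOn_Ioi]
    exact integrableOn_Ioi_rpow_of_lt (by linarith) hR
  refine (((integrable_indicator_iff measurableSet_Ici).2 hpow).integrableOn).congr_fun
    (fun r (hr : 0 < r) => ?_) measurableSet_Ioi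
  by_cases hrR : R ≤ r
  · simp only [indicator_of_mem (mem_Ici.2 hrR), smul_eq_mul]
    rw [← rpow_natCast, ← rpow_add hr, Nat.cast_sub Module.finrank_pos, Nat.cast_one]
    ring_nf
  · simp [indicator_of_notMem (show r ∉ Ici R from hrR)]

theorem setIntegral_compl_ball_norm_rpow {t R : ℝ} (hR : 0 < R) :
    ∫ x in (ball (0 : E) R)ᶜ, ‖x‖ ^ t ∂μ =
      R ^ (t + Module.finrank ℝ E) * ∫ x in (ball (0 : E) 1)ᶜ, ‖x‖ ^ t ∂μ := by
  have hset : R • (ball (0 : E) 1)ᶜ = (ball 0 R)ᶜ := by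
    ext x
    rw [mem_smul_set_iff_inv_smul_mem₀ hR.ne', mem_compl_iff, mem_compl_iff, mem_ball_zero_iff,
      mem_ball_zero_iff, norm_smul, norm_inv, norm_of_nonneg hR.le, inv_mul_lt_iff₀ hR, mul_one]
  have hscale := Measure.setIntegral_comp_smul_of_pos μ (fun x : E => ‖x‖ ^ t)
    (ball (0 : E) 1)ᶜ hR
  simp only [norm_smul, norm_of_nonneg hR.le, mul_rpow hR.le (norm_nonneg _),
    integral_const_mul, hset, smul_eq_mul] at hscale
  rw [rpow_add hR, rpow_natCast, mul_right_comm, hscale]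
  field_simp

theorem integrable_of_norm_le_rpow_of_norm_le_rpow [Nontrivial E] {F : Type*}
    [NormedAddCommGroup F] {f : E → F} {C a t : ℝ}
    (ha : -Module.finrank ℝ E < a) (ht : t < -Module.finrank ℝ E)
    (hf : AEStronglyMeasurable f μ) (h_zero : ∀ x, ‖x‖ < 1 → ‖f x‖ ≤ C * ‖x‖ ^ a)
    (h_infty : ∀ x, 1 ≤ ‖x‖ → ‖f x‖ ≤ C * ‖x‖ ^ t) :
    Integrable f μ := by
  have hball : IntegrableOn f (ball 0 1) μ :=
    integrableOn_ball_of_norm_le_rpow Module.finrank_pos (α := -a) (by linarith)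
      (ae_restrict_of_forall_mem measurableSet_ball fun x hx => by
        simpa using h_zero x (mem_ball_zero_iff.1 hx)) hf
  have htail : IntegrableOn f (ball 0 1)ᶜ μ :=
    ((integrableOn_compl_ball_norm_rpow μ ht one_pos).const_mul C).mono' hf.restrict
      (ae_restrict_of_forall_mem measurableSet_ball.compl fun x hx => h_infty x (by simpa using hx))
  simpa using hball.union htail

theorem isBigO_integral_comp_smul_mul_sub_integral [Nontrivial E] {ψ g : E → ℝ} {C t δ : ℝ}
    (hψ : Measurable ψ) (hψ01 : ∀ x, ψ x ∈ Icc (0 : ℝ) 1) (hδ : 0 < δ)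
    (hψ1 : ∀ x, ‖x‖ < δ → ψ x = 1) (hg : Integrable g μ) (ht : t < -Module.finrank ℝ E)
    (hg_tail : ∀ x, 0 < ‖x‖ → ‖g x‖ ≤ C * ‖x‖ ^ t) :
    (fun ε : ℝ => ∫ y, ψ (ε • y) * g y ∂μ - ∫ y, g y ∂μ)
      =O[𝓝[>] 0] fun ε => ε ^ (-(t + Module.finrank ℝ E)) := by
  set d : ℝ := (Module.finrank ℝ E : ℝ)
  refine IsBigO.of_bound (C * δ ^ (t + d) * ∫ x in (ball (0 : E) 1)ᶜ, ‖x‖ ^ t ∂μ) ?_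
  filter_upwards [self_mem_nhdsWithin] with ε (hε : 0 < ε)
  have hR : 0 < δ / ε := div_pos hδ hε
  have hψε : Integrable (fun y => ψ (ε • y) * g y) μ :=
    hg.bdd_mul (hψ.comp (measurable_const_smul ε)).aestronglyMeasurable
      (ae_of_all _ fun y => by rw [norm_of_nonneg (hψ01 _).1]; exact (hψ01 _).2)
  have hmajorant : Integrable ((ball (0 : E) (δ / ε))ᶜ.indicator fun y => C * ‖y‖ ^ t) μ :=
    (integrable_indicator_iff measurableSet_ball.compl).2
      ((integrableOn_compl_ball_norm_rpow μ ht hR).const_mul C)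
  have hpointwise : ∀ y, ‖ψ (ε • y) * g y - g y‖ ≤
      (ball (0 : E) (δ / ε))ᶜ.indicator (fun y => C * ‖y‖ ^ t) y := by
    intro y
    by_cases hy : y ∈ ball (0 : E) (δ / ε)
    · have hεy : ‖ε • y‖ < δ := by
        rw [mem_ball_zero_iff, lt_div_iff₀ hε] at hy
        rwa [norm_smul, norm_of_nonneg hε.le, mul_comm]
      simp [hψ1 _ hεy, hy]
    · have hy' : δ / ε ≤ ‖y‖ := by simpa using hy
      obtain ⟨hψεy₀, hψεy₁⟩ := hψ01 (ε • y)
      calc ‖ψ (ε • y) * g y - g y‖ = |1 - ψ (ε • y)| * ‖g y‖ := by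
            rw [norm_eq_abs, norm_eq_abs, ← abs_mul, abs_sub_comm]
            congr 1
            ring
        _ ≤ 1 * ‖g y‖ := by
            gcongr
            exact abs_le.2 ⟨by linarith, by linarith⟩
        _ ≤ _ := by
            rw [one_mul, indicator_of_mem (show y ∈ (ball (0 : E) (δ / ε))ᶜ from hy)]
            exact hg_tail y (hR.trans_le hy')
  calc ‖∫ y, ψ (ε • y) * g y ∂μ - ∫ y, g y ∂μ‖
      = ‖∫ y, (ψ (ε • y) * g y - g y) ∂μ‖ := by rw [integral_sub hψε hg]
    _ ≤ ∫ y, (ball (0 : E) (δ / ε))ᶜ.indicator (fun y => C * ‖y‖ ^ t) y ∂μ :=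
        norm_integral_le_of_norm_le hmajorant (ae_of_all _ hpointwise)
    _ = C * (δ / ε) ^ (t + d) * ∫ x in (ball (0 : E) 1)ᶜ, ‖x‖ ^ t ∂μ := by
        rw [integral_indicator measurableSet_ball.compl, integral_const_mul,
          setIntegral_compl_ball_norm_rpow μ hR, mul_assoc]
    _ = C * δ ^ (t + d) * (∫ x in (ball (0 : E) 1)ᶜ, ‖x‖ ^ t ∂μ) * ‖ε ^ (-(t + d))‖ := by
        rw [div_rpow hδ.le hε.le, norm_of_nonneg (by positivity), rpow_neg hε.le, div_eq_mul_inv]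
        ring

end MeasureTheory

section Bubble

variable {E : Type*} [NormedAddCommGroup E]

/-- `bubble ((3 + α) ^ (1 / (4 + 2 α))) (2 + α) ε` is the paper's `U_{ε,α}`. -/
noncomputable def bubble (c b ε : ℝ) (x : E) : ℝ :=
  c * ε ^ (1 / 2 : ℝ) / (ε ^ b + ‖x‖ ^ b) ^ (1 / b)

variable {c b ε : ℝ}

theorem bubble_nonneg (hc : 0 ≤ c) (hε : 0 ≤ ε) (x : E) : 0 ≤ bubble c b ε x := by
  unfold bubble
  positivity

theorem bubble_one (c b : ℝ) (x : E) : bubble c b 1 x = c / (1 + ‖x‖ ^ b) ^ (1 / b) := by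
  simp [bubble]

theorem bubble_one_le (hc : 0 ≤ c) (hb : 0 < b) (x : E) : bubble c b 1 x ≤ c := by
  rw [bubble_one]
  refine div_le_self hc (one_le_rpow ?_ (by positivity))
  linarith [rpow_nonneg (norm_nonneg x) b]

theorem bubble_one_le_div_norm (hc : 0 ≤ c) (hb : 0 < b) {x : E} (hx : x ≠ 0) :
    bubble c b 1 x ≤ c / ‖x‖ := by
  have hnorm : ‖x‖ = (‖x‖ ^ b) ^ (1 / b) := by
    rw [← rpow_mul (norm_nonneg x), mul_one_div_cancel hb.ne', rpow_one]
  rw [bubble_one]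
  refine div_le_div_of_nonneg_left hc (norm_pos_iff.2 hx) ?_
  conv_lhs => rw [hnorm]
  gcongr
  linarith

theorem bubble_smul [NormedSpace ℝ E] (hb : 0 < b) (hε : 0 < ε) (y : E) :
    bubble c b ε (ε • y) = ε ^ (-(1 / 2) : ℝ) * bubble c b 1 y := by
  have hden : (ε ^ b + ‖ε • y‖ ^ b) ^ (1 / b) = ε * (1 + ‖y‖ ^ b) ^ (1 / b) := by
    rw [norm_smul, norm_of_nonneg hε.le, mul_rpow hε.le (norm_nonneg y),
      show ε ^ b + ε ^ b * ‖y‖ ^ b = ε ^ b * (1 + ‖y‖ ^ b) by ring,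
      mul_rpow (by positivity) (by positivity), ← rpow_mul hε.le, mul_one_div_cancel hb.ne',
      rpow_one]
  rw [bubble, hden, bubble_one, rpow_neg hε.le, show (1 / 2 : ℝ) = 1 - 1 / 2 by norm_num,
    rpow_sub hε, rpow_one]
  have hden_pos : 0 < (1 + ‖y‖ ^ b) ^ (1 / b) := by positivity
  field_simp
  rw [← rpow_natCast, ← rpow_mul hε.le]
  norm_num

end Bubble

section WeightedBubble

variable {E : Type*} [NormedAddCommGroup E] {a b c p : ℝ}

theorem norm_rpow_mul_bubble_rpow_le (hc : 0 ≤ c) (hb : 0 < b) (hp : 0 ≤ p) (x : E) :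
    ‖‖x‖ ^ a * bubble c b 1 x ^ p‖ ≤ c ^ p * ‖x‖ ^ a := by
  have hB := bubble_nonneg hc zero_le_one (b := b) x
  rw [norm_of_nonneg (by positivity), mul_comm]
  gcongr
  exact bubble_one_le hc hb x

theorem norm_rpow_mul_bubble_rpow_le_of_ne_zero (hc : 0 ≤ c) (hb : 0 < b) (hp : 0 ≤ p)
    {x : E} (hx : x ≠ 0) :
    ‖‖x‖ ^ a * bubble c b 1 x ^ p‖ ≤ c ^ p * ‖x‖ ^ (a - p) := by
  have hB := bubble_nonneg hc zero_le_one (b := b) x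
  calc ‖‖x‖ ^ a * bubble c b 1 x ^ p‖ ≤ ‖x‖ ^ a * (c / ‖x‖) ^ p := by
        rw [norm_of_nonneg (by positivity)]
        gcongr
        exact bubble_one_le_div_norm hc hb hx
    _ = c ^ p * ‖x‖ ^ (a - p) := by
        rw [div_rpow hc (norm_nonneg x), rpow_sub (norm_pos_iff.2 hx)]
        ring

theorem integrable_norm_rpow_mul_bubble_rpow [NormedSpace ℝ E] [FiniteDimensional ℝ E]
    [MeasurableSpace E] [BorelSpace E] [Nontrivial E] (μ : Measure E) [μ.IsAddHaarMeasure]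
    (hc : 0 ≤ c) (hb : 0 < b) (hp : 0 ≤ p) (ha : -Module.finrank ℝ E < a)
    (hap : a - p < -Module.finrank ℝ E) :
    Integrable (fun x : E => ‖x‖ ^ a * bubble c b 1 x ^ p) μ := by
  refine integrable_of_norm_le_rpow_of_norm_le_rpow μ ha hap ?_
    (fun x _ => norm_rpow_mul_bubble_rpow_le hc hb hp x)
    (fun x hx => norm_rpow_mul_bubble_rpow_le_of_ne_zero hc hb hp
      (norm_pos_iff.1 (one_pos.trans_le hx)))
  unfold bubble
  fun_prop

end WeightedBubble

theorem setIntegral_ball_norm_rpow_mul_cutoff_bubble {a b c ε : ℝ} {φ : E3 → ℝ}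
    (ha : -3 < a) (hc : 0 ≤ c) (hb : 0 < b) (hε : 0 < ε) (hφ_nonneg : ∀ x, 0 ≤ φ x)
    (hφ_zero : ∀ x, 1 ≤ ‖x‖ → φ x = 0) :
    ∫ x in ball (0 : E3) 1, ‖x‖ ^ a * |φ x * bubble c b ε x| ^ (6 + 2 * a) =
      ∫ y, φ (ε • y) ^ (6 + 2 * a) * (‖y‖ ^ a * bubble c b 1 y ^ (6 + 2 * a)) := by
  set p := 6 + 2 * a with hp
  have hp0 : 0 < p := by linarith
  rw [setIntegral_eq_integral_of_forall_compl_eq_zero fun x hx => by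
    rw [hφ_zero x (by simpa using hx), zero_mul, abs_zero, zero_rpow hp0.ne', mul_zero]]
  have hscale := Measure.integral_comp_smul_of_nonneg volume
    (fun x : E3 => ‖x‖ ^ a * |φ x * bubble c b ε x| ^ p) ε (hR := hε.le)
  rw [finrank_euclideanSpace_fin, smul_eq_mul, eq_inv_mul_iff_mul_eq₀ (by positivity)] at hscale
  rw [← hscale, ← integral_const_mul]
  refine integral_congr_ae (ae_of_all _ fun y => ?_)
  have hε_pow : ε ^ 3 * (ε ^ a * (ε ^ (-(1 / 2) : ℝ)) ^ p) = 1 := by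
    rw [← rpow_natCast, ← rpow_mul hε.le, ← rpow_add hε, ← rpow_add hε, hp]
    ring_nf
    exact rpow_zero ε
  have hφy := hφ_nonneg (ε • y)
  have hBy := bubble_nonneg hc zero_le_one (b := b) y
  simp only [bubble_smul hb hε, norm_smul, norm_of_nonneg hε.le]
  rw [abs_of_nonneg (by positivity), mul_rpow hε.le (norm_nonneg y), mul_rpow hφy (by positivity),
    mul_rpow (by positivity) hBy]
  linear_combination (φ (ε • y) ^ p * (‖y‖ ^ a * bubble c b 1 y ^ p)) * hε_pow

theorem stmt6_general (a1 a2 : ℝ) (ha2 : -2 < a2) (ha1 : -1 < a1)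
    (φ : E3 → ℝ) (hφs : ContDiff ℝ (⊤ : ℕ∞) φ)
    (hφb : ∀ x : E3, φ x ∈ Set.Icc (0 : ℝ) 1)
    (hφ1 : ∀ x : E3, ‖x‖ ≤ 1 / 3 → φ x = 1)
    (hφ0 : ∀ x : E3, 2 / 3 ≤ ‖x‖ → φ x = 0)
    (u : ℝ → E3 → ℝ)
    (hu : ∀ (ε : ℝ) (x : E3), u ε x = φ x * ((3 + a1) ^ (1 / (4 + 2 * a1)) * ε ^ ((1 : ℝ) / 2) /
      (ε ^ (2 + a1) + ‖x‖ ^ (2 + a1)) ^ (1 / (2 + a1))))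
    (U1 : E3 → ℝ)
    (hU1 : ∀ x : E3, U1 x = (3 + a1) ^ (1 / (4 + 2 * a1)) / (1 + ‖x‖ ^ (2 + a1)) ^ (1 / (2 + a1)))
    (K : ℝ) (hK : K = ∫ x : E3, ‖x‖ ^ a2 * U1 x ^ (6 + 2 * a2)) :
    Integrable (fun x : E3 => ‖x‖ ^ a2 * U1 x ^ (6 + 2 * a2)) ∧
    (fun ε : ℝ => (∫ x in Metric.ball (0 : E3) 1, ‖x‖ ^ a2 * |u ε x| ^ (6 + 2 * a2)) - K)
      =O[nhdsWithin 0 (Set.Ioi 0)] (fun ε : ℝ => ε ^ (3 + a2)) := by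
  set c : ℝ := (3 + a1) ^ (1 / (4 + 2 * a1))
  have hc : 0 ≤ c := rpow_nonneg (by linarith) _
  have hb : 0 < 2 + a1 := by linarith
  have hdim : (Module.finrank ℝ E3 : ℝ) = 3 := by simp
  obtain rfl : u = fun ε x => φ x * bubble c (2 + a1) ε x := funext fun ε => funext (hu ε)
  obtain rfl : U1 = bubble c (2 + a1) 1 := funext fun x => by rw [hU1, bubble_one]
  have hg := integrable_norm_rpow_mul_bubble_rpow (volume : Measure E3) (a := a2)
    (p := 6 + 2 * a2) hc hb (by linarith) (by rw [hdim]; linarith) (by rw [hdim]; linarith)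
  refine ⟨hg, ?_⟩
  have hcutoff := isBigO_integral_comp_smul_mul_sub_integral (volume : Measure E3)
    (ψ := fun x => φ x ^ (6 + 2 * a2)) (δ := 1 / 3) (t := a2 - (6 + 2 * a2))
    (hφs.continuous.measurable.pow_const _)
    (fun x => ⟨rpow_nonneg (hφb x).1 _, rpow_le_one (hφb x).1 (hφb x).2 (by linarith)⟩)
    (by norm_num) (fun x hx => by rw [hφ1 x hx.le, one_rpow]) hg (by rw [hdim]; linarith)
    (fun x hx => norm_rpow_mul_bubble_rpow_le_of_ne_zero hc hb (by linarith) (norm_pos_iff.1 hx))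
  rw [hdim] at hcutoff
  refine hcutoff.congr' ?_ (Eventually.of_forall fun ε => by ring_nf)
  filter_upwards [self_mem_nhdsWithin] with ε (hε : 0 < ε)
  rw [hK, setIntegral_ball_norm_rpow_mul_cutoff_bubble (by linarith) hc hb hε
    (fun x => (hφb x).1) (fun x hx => hφ0 x (by linarith))]

/-- For the truncated bubble `u_{ε,α₁} = φ U_{ε,α₁}` and
`K̃ = ∫_{ℝ³} |x|^{α₂} U_{1,α₁}^{6+2α₂}`, the constant `K̃` is finite and
`∫_B |x|^{α₂} |u_{ε,α₁}|^{6+2α₂} = K̃ + O(ε^{3+α₂})` as `ε → 0⁺`. -/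
theorem stmt6 (a1 a2 : ℝ) (ha2 : -2 < a2) (h21 : a2 < a1) (ha1 : -1 < a1)
    (φ : E3 → ℝ) (hφs : ContDiff ℝ (⊤ : ℕ∞) φ) (hφc : HasCompactSupport φ)
    (hφsub : tsupport φ ⊆ Metric.ball (0 : E3) 1)
    (hφb : ∀ x : E3, φ x ∈ Set.Icc (0 : ℝ) 1)
    (hφrad : ∀ x y : E3, ‖x‖ = ‖y‖ → φ x = φ y)
    (hφ1 : ∀ x : E3, ‖x‖ ≤ 1 / 3 → φ x = 1)
    (hφ0 : ∀ x : E3, 2 / 3 ≤ ‖x‖ → φ x = 0)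
    (u : ℝ → E3 → ℝ)
    (hu : ∀ (ε : ℝ) (x : E3), u ε x = φ x * ((3 + a1) ^ (1 / (4 + 2 * a1)) * ε ^ ((1 : ℝ) / 2) /
      (ε ^ (2 + a1) + ‖x‖ ^ (2 + a1)) ^ (1 / (2 + a1))))
    (U1 : E3 → ℝ)
    (hU1 : ∀ x : E3, U1 x = (3 + a1) ^ (1 / (4 + 2 * a1)) / (1 + ‖x‖ ^ (2 + a1)) ^ (1 / (2 + a1)))
    (K : ℝ) (hK : K = ∫ x : E3, ‖x‖ ^ a2 * U1 x ^ (6 + 2 * a2)) :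
    Integrable (fun x : E3 => ‖x‖ ^ a2 * U1 x ^ (6 + 2 * a2)) ∧
    (fun ε : ℝ => (∫ x in Metric.ball (0 : E3) 1, ‖x‖ ^ a2 * |u ε x| ^ (6 + 2 * a2)) - K)
      =O[nhdsWithin 0 (Set.Ioi 0)] (fun ε : ℝ => ε ^ (3 + a2)) :=
  stmt6_general a1 a2 ha2 ha1 φ hφs hφb hφ1 hφ0 u hu U1 hU1 K hK
end
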